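/- Let G be a matching-covered graph with a separating facet-defining cut C, let B' ⊆ ℤ^E be an integral basis of lin(P(G;C)) consisting of incidence vectors of perfect matchings each meeting C once, and let M be a perfect matching with |M ∩ C| = 3. Then B := B' ∪ {1_M} is an integral basis of lin(P(G)): B is linearly independent and every z ∈ lin(P(G)) ∩ ℤ^E is an integer linear combination of B. In particular, the coefficient α_M of 1_M in the expansion of such z satisfies 2α_M = z(C) − c where c = z(δ(v)) for any vertex v, and z(C) ≡ c (mod 2). -/

import Mathlib

open Classical Finset

noncomputable section

namespace PaperPM

variable {V : Type} [Fintype V] [DecidableEq V]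

/-- `M` is (the edge set of) a perfect matching of `G`. -/
def IsPM (G : SimpleGraph V) (M : Finset (Sym2 V)) : Prop :=
  (M : Set (Sym2 V)) ⊆ G.edgeSet ∧ ∀ v : V, ∃! e, e ∈ M ∧ v ∈ e

/-- `G` is matching-covered: every edge lies in a perfect matching. -/
def MatchingCovered (G : SimpleGraph V) : Prop :=
  ∀ e ∈ G.edgeSet, ∃ M, IsPM G M ∧ e ∈ M

/-- incidence (indicator) vector of a set of edges -/
def indVec (M : Finset (Sym2 V)) : Sym2 V → ℝ := fun e => if e ∈ M then 1 else 0

/-- the perfect matching polytope of `G` -/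
def pmPolytope (G : SimpleGraph V) : Set (Sym2 V → ℝ) :=
  convexHull ℝ {x | ∃ M, IsPM G M ∧ x = indVec M}

/-- the cut `δ(X)`: edges of `G` with exactly one endpoint in `X` -/
def cutE (G : SimpleGraph V) (X : Set V) : Finset (Sym2 V) :=
  Finset.univ.filter fun e =>
    e ∈ G.edgeSet ∧ ∃ u v : V, e = s(u, v) ∧ u ∈ X ∧ v ∉ X

/-- `x(A) = Σ_{a ∈ A} x_a` -/
def edgeSum (x : Sym2 V → ℝ) (A : Finset (Sym2 V)) : ℝ := ∑ e ∈ A, x e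

/-- the face `P(G;C) = P(G) ∩ {x : x(δ(X)) = 1}` -/
def faceCut (G : SimpleGraph V) (X : Set V) : Set (Sym2 V → ℝ) :=
  {x ∈ pmPolytope G | edgeSum x (cutE G X) = 1}

/-- `δ(X)` is a tight cut -/
def TightCut (G : SimpleGraph V) (X : Set V) : Prop :=
  Odd X.toFinset.card ∧ 1 < X.toFinset.card ∧ X.toFinset.card < Fintype.card V - 1 ∧
    ∀ M, IsPM G M → (M ∩ cutE G X).card = 1

/-- a brick: non-bipartite matching-covered graph without tight cuts -/
def IsBrick (G : SimpleGraph V) : Prop :=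
  MatchingCovered G ∧ ¬ G.Colorable 2 ∧ ∀ X : Set V, ¬ TightCut G X

/-- dimension of a subset of `ℝ^{Sym2 V}` (affine dimension; `-1` for the empty set) -/
def polyDim (s : Set (Sym2 V → ℝ)) : ℤ :=
  if s = ∅ then -1 else (Module.finrank ℝ (vectorSpan ℝ s) : ℤ)

/-- number of bricks in a tight cut decomposition of `G`, via the dimension
formula `dim P(G) = |E| − |V| + 1 − b(G)` of Naddef and Edmonds–Pulleyblank–Lovász. -/
def brickCount (G : SimpleGraph V) : ℤ :=
  (G.edgeFinset.card : ℤ) - Fintype.card V + 1 - polyDim (pmPolytope G)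

/-- (the edge set of) a perfect matching of the contraction `G/X`, viewed inside `G`:
no edge inside `X`, exactly one cut edge (covering the contraction vertex), and every
vertex outside `X` covered exactly once. This keeps multiple parallel cut edges distinct. -/
def IsPMContr (G : SimpleGraph V) (X : Set V) (M : Finset (Sym2 V)) : Prop :=
  (M : Set (Sym2 V)) ⊆ G.edgeSet ∧ (∀ e ∈ M, ¬ ∀ v ∈ e, v ∈ X) ∧
    (M ∩ cutE G X).card = 1 ∧ ∀ v : V, v ∉ X → ∃! e, e ∈ M ∧ v ∈ e

/-- the contraction `G/X` is matching-covered (every one of its edges, i.e. every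
edge of `G` not inside `X`, lies in a perfect matching of `G/X`). -/
def MatchingCoveredContr (G : SimpleGraph V) (X : Set V) : Prop :=
  ∀ e ∈ G.edgeSet, (¬ ∀ v ∈ e, v ∈ X) → ∃ M, IsPMContr G X M ∧ e ∈ M

/-- `δ(X)` is a separating cut: odd, nontrivial, and both cut-contractions
`G/X` and `G/X̄` are matching-covered. -/
def SeparatingCut (G : SimpleGraph V) (X : Set V) : Prop :=
  Odd X.toFinset.card ∧ 1 < X.toFinset.card ∧ X.toFinset.card < Fintype.card V - 1 ∧
    MatchingCoveredContr G X ∧ MatchingCoveredContr G Xᶜ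

/-- the edges of the contraction `G/X`, as edges of `G` -/
def contrEdges (G : SimpleGraph V) (X : Set V) : Finset (Sym2 V) :=
  G.edgeFinset.filter fun e => ¬ ∀ v ∈ e, v ∈ X

/-- the perfect matching polytope of the contraction `G/X`, in the coordinates of `G` -/
def contrPolytope (G : SimpleGraph V) (X : Set V) : Set (Sym2 V → ℝ) :=
  convexHull ℝ {x | ∃ M, IsPMContr G X M ∧ x = indVec M}

/-- number of bricks of the contraction `G/X`, via the dimension formula -/
def brickCountContr (G : SimpleGraph V) (X : Set V) : ℤ :=
  (contrEdges G X).card - ((Fintype.card V - X.toFinset.card : ℕ) + 1) + 1 -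
    polyDim (contrPolytope G X)

/-- the contraction `G/X` is a Birkhoff–von Neumann graph: its perfect matching
polytope is cut out by nonnegativity, the degree equations, and `x(δ(X)) = 1`. -/
def BvNContr (G : SimpleGraph V) (X : Set V) : Prop :=
  contrPolytope G X =
    {x | (∀ e, 0 ≤ x e) ∧ (∀ e : Sym2 V, (e ∉ G.edgeSet ∨ ∀ v ∈ e, v ∈ X) → x e = 0) ∧
      (∀ v : V, v ∉ X → edgeSum x (cutE G {v}) = 1) ∧ edgeSum x (cutE G X) = 1}

/-- the contraction `G/X` is bipartite -/
def ContrBipartite (G : SimpleGraph V) (X : Set V) : Prop :=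
  ∃ (c : V → Bool) (b : Bool), ∀ u v : V, G.Adj u v → (u ∉ X ∨ v ∉ X) →
    (if u ∈ X then b else c u) ≠ (if v ∈ X then b else c v)

/-- `G` is a Birkhoff–von Neumann graph -/
def BvN (G : SimpleGraph V) : Prop :=
  pmPolytope G =
    {x | (∀ e, 0 ≤ x e) ∧ (∀ e : Sym2 V, e ∉ G.edgeSet → x e = 0) ∧
      ∀ v : V, edgeSum x (cutE G {v}) = 1}

/-- `F` is a face of the convex set `P` -/
def IsFaceOf {E : Type*} [AddCommGroup E] [Module ℝ E] (P F : Set E) : Prop :=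
  F ⊆ P ∧ Convex ℝ F ∧ ∀ x ∈ P, ∀ y ∈ P, ∀ t : ℝ, 0 < t → t < 1 →
    t • x + (1 - t) • y ∈ F → x ∈ F ∧ y ∈ F

/-- a vector is integral if all its coordinates are integers -/
def Integral (x : Sym2 V → ℝ) : Prop := ∀ e, ∃ n : ℤ, x e = (n : ℝ)

/-- the Petersen graph, as the Kneser graph `K(5,2)` -/
def petersenGraph : SimpleGraph {s : Finset (Fin 5) // s.card = 2} where
  Adj a b := Disjoint (a : Finset (Fin 5)) (b : Finset (Fin 5))
  symm := ⟨fun _ _ h => h.symm⟩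
  loopless := ⟨fun a h => by
    have h0 : (a : Finset (Fin 5)) = ∅ := by
      rw [← Finset.bot_eq_empty]
      exact disjoint_self.mp h
    have h2 := a.2
    rw [h0] at h2
    simp at h2⟩

/-!
Every perfect matching meets each `δ(v)` once, the matchings of `B'` meet `C = δ(X)` once, and
`M` meets it three times. Hence the linear functional `z ↦ z(C) − z(δ(v))` vanishes on `lin B'`
and equals `2` at `1_M`: it reads off twice the coefficient of `1_M`. In particular
`1_M ∉ lin B'`, and since `P(G;C)` is a facet of `P(G)` and both lie in the hyperplane
`x(δ(v)) = 1`, `B' ∪ {1_M}` spans `lin P(G)`. On `lin P(G)` all `z(δ(u))` agree, so counting edge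
ends in `X` gives `|X| · z(δ(v)) = z(C) + 2 z(E[X])`; for integral `z` and odd `|X|` the coefficient
of `1_M` is therefore an integer, and what remains is an integral vector of `lin B'`.
-/

theorem _root_.Submodule.span_convexHull {K E : Type*} [Field K] [LinearOrder K]
    [IsStrictOrderedRing K] [AddCommGroup E] [Module K E] (s : Set E) :
    Submodule.span K (convexHull K s) = Submodule.span K s :=
  le_antisymm
    (Submodule.span_le.2 (convexHull_min Submodule.subset_span (Submodule.span K s).convex))
    (Submodule.span_mono (subset_convexHull K s))

theorem _root_.finrank_span_eq_finrank_vectorSpan_add_one {K E : Type*} [Field K] [AddCommGroup E]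
    [Module K E] [FiniteDimensional K E] (f : E →ₗ[K] K) {S : Set E} (hS : ∀ x ∈ S, f x = 1)
    {x₀ : E} (hx₀ : x₀ ∈ S) :
    Module.finrank K (Submodule.span K S) = Module.finrank K (vectorSpan K S) + 1 := by
  have hvec : vectorSpan K S ≤ LinearMap.ker f := by
    rw [vectorSpan_def, Submodule.span_le]
    rintro _ ⟨a, ha, b, hb, rfl⟩
    simp [hS a ha, hS b hb]
  have hx₀_notMem : x₀ ∉ vectorSpan K S := fun h => by simpa [hS x₀ hx₀] using hvec h
  have hspan : Submodule.span K S = vectorSpan K S ⊔ K ∙ x₀ := by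
    refine le_antisymm (Submodule.span_le.2 fun x hx => ?_) (sup_le ?_ ?_)
    · rw [← sub_add_cancel x x₀]
      exact Submodule.add_mem_sup (vsub_mem_vectorSpan K hx hx₀)
        (Submodule.mem_span_singleton_self x₀)
    · rw [vectorSpan_def, Submodule.span_le]
      rintro _ ⟨a, ha, b, hb, rfl⟩
      exact sub_mem (Submodule.subset_span ha) (Submodule.subset_span hb)
    · exact Submodule.span_mono (Set.singleton_subset_iff.2 hx₀)
  rw [hspan, Submodule.finrank_sup_span_singleton hx₀_notMem]

omit [Fintype V] [DecidableEq V] in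
theorem edgeSum_add (x y : Sym2 V → ℝ) (A : Finset (Sym2 V)) :
    edgeSum (x + y) A = edgeSum x A + edgeSum y A :=
  Finset.sum_add_distrib

omit [Fintype V] [DecidableEq V] in
theorem edgeSum_smul (c : ℝ) (x : Sym2 V → ℝ) (A : Finset (Sym2 V)) :
    edgeSum (c • x) A = c * edgeSum x A :=
  (Finset.mul_sum ..).symm

def edgeSumL (A : Finset (Sym2 V)) : (Sym2 V → ℝ) →ₗ[ℝ] ℝ where
  toFun x := edgeSum x A
  map_add' x y := edgeSum_add x y A
  map_smul' c x := edgeSum_smul c x A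

omit [Fintype V] in
theorem edgeSum_indVec (N A : Finset (Sym2 V)) : edgeSum (indVec N) A = #(N ∩ A) := by
  simp [edgeSum, indVec, Finset.inter_comm]

theorem mk_mem_cutE {G : SimpleGraph V} {X : Set V} {a b : V} :
    s(a, b) ∈ cutE G X ↔ G.Adj a b ∧ Xor (a ∈ X) (b ∈ X) := by
  simp only [cutE, Finset.mem_filter, Finset.mem_univ, true_and, SimpleGraph.mem_edgeSet,
    Sym2.eq_iff, Xor]
  constructor
  · rintro ⟨hab, u, v, (⟨rfl, rfl⟩ | ⟨rfl, rfl⟩), hu, hv⟩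
    · exact ⟨hab, Or.inl ⟨hu, hv⟩⟩
    · exact ⟨hab, Or.inr ⟨hu, hv⟩⟩
  · rintro ⟨hab, ⟨ha, hb⟩ | ⟨hb, ha⟩⟩
    · exact ⟨hab, a, b, Or.inl ⟨rfl, rfl⟩, ha, hb⟩
    · exact ⟨hab, b, a, Or.inr ⟨rfl, rfl⟩, hb, ha⟩

theorem mem_cutE_singleton {G : SimpleGraph V} {v : V} {e : Sym2 V} :
    e ∈ cutE G {v} ↔ e ∈ G.edgeSet ∧ v ∈ e := by
  induction e with
  | _ a b =>
    rw [mk_mem_cutE, SimpleGraph.mem_edgeSet, Sym2.mem_iff]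
    by_cases hab : G.Adj a b
    · have hne := hab.ne
      simp only [Set.mem_singleton_iff, Xor, hab, true_and]
      grind
    · simp [hab]

theorem IsPM.card_inter_cutE_singleton {G : SimpleGraph V} {N : Finset (Sym2 V)} (hN : IsPM G N)
    (v : V) : #(N ∩ cutE G {v}) = 1 := by
  obtain ⟨e, ⟨heN, hve⟩, huniq⟩ := hN.2 v
  rw [Finset.card_eq_one]
  refine ⟨e, Finset.eq_singleton_iff_unique_mem.2 ⟨?_, fun f hf => ?_⟩⟩
  · exact Finset.mem_inter.2 ⟨heN, mem_cutE_singleton.2 ⟨hN.1 heN, hve⟩⟩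
  · obtain ⟨hfN, hfv⟩ := Finset.mem_inter.1 hf
    exact huniq f ⟨hfN, (mem_cutE_singleton.1 hfv).2⟩

omit [Fintype V] in
theorem sum_ite_mem_mk {R : Type*} [AddCommMonoid R] (X : Finset V) {a b : V} (hab : a ≠ b)
    (c : R) :
    ∑ u ∈ X, (if u ∈ s(a, b) then c else 0) =
      (if a ∈ X then c else 0) + (if b ∈ X then c else 0) := by
  have hsplit (u : V) : (if u ∈ s(a, b) then c else 0) =
      (if a = u then c else 0) + (if b = u then c else 0) := by
    simp only [Sym2.mem_iff]
    split_ifs <;> grind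
  rw [Finset.sum_congr rfl fun u _ => hsplit u, Finset.sum_add_distrib, Finset.sum_ite_eq,
    Finset.sum_ite_eq]

theorem sum_edgeSum_cutE_singleton (G : SimpleGraph V) (X : Set V) (z : Sym2 V → ℝ) :
    ∑ u ∈ X.toFinset, edgeSum z (cutE G {u}) =
      edgeSum z (cutE G X) + 2 * edgeSum z {e ∈ G.edgeFinset | ∀ v ∈ e, v ∈ X} := by
  have hsingleton (u : V) :
      edgeSum z (cutE G {u}) = ∑ e ∈ G.edgeFinset, if u ∈ e then z e else 0 := by
    rw [edgeSum, ← Finset.sum_filter]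
    congr 1
    ext e
    simp [mem_cutE_singleton]
  have hcut : edgeSum z (cutE G X) = ∑ e ∈ G.edgeFinset, if e ∈ cutE G X then z e else 0 := by
    rw [← Finset.sum_filter, edgeSum]
    congr 1
    ext e
    simp only [Finset.mem_filter, SimpleGraph.mem_edgeFinset]
    exact ⟨fun h => ⟨(Finset.mem_filter.1 h).2.1, h⟩, And.right⟩
  have hedge (e) (he : e ∈ G.edgeFinset) : ∑ u ∈ X.toFinset, (if u ∈ e then z e else 0) =
      (if e ∈ cutE G X then z e else 0) + 2 * (if ∀ v ∈ e, v ∈ X then z e else 0) := by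
    induction e with
    | _ a b =>
      have hab : G.Adj a b := SimpleGraph.mem_edgeFinset.1 he
      rw [sum_ite_mem_mk _ hab.ne]
      by_cases ha : a ∈ X <;> by_cases hb : b ∈ X <;>
        simp [mk_mem_cutE, ha, hb, hab, Xor, two_mul]
  rw [Finset.sum_congr rfl fun u _ => hsingleton u, Finset.sum_comm, Finset.sum_congr rfl hedge,
    Finset.sum_add_distrib, hcut, edgeSum, Finset.sum_filter, Finset.mul_sum]

omit [Fintype V] [DecidableEq V] in
theorem Integral.exists_edgeSum_eq_intCast {z : Sym2 V → ℝ} (hz : Integral z)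
    (A : Finset (Sym2 V)) : ∃ k : ℤ, edgeSum z A = k := by
  choose n hn using hz
  exact ⟨∑ e ∈ A, n e, by simp [edgeSum, hn]⟩

omit [Fintype V] in
theorem Integral.sub_intCast_smul_indVec {z : Sym2 V → ℝ} (hz : Integral z) (m : ℤ)
    (N : Finset (Sym2 V)) : Integral (z - (m : ℝ) • indVec N) := by
  intro e
  obtain ⟨n, hn⟩ := hz e
  by_cases he : e ∈ N
  · exact ⟨n - m, by simp [indVec, he, hn]⟩
  · exact ⟨n, by simp [indVec, he, hn]⟩

theorem edgeSum_cutE_singleton_eq_one_of_mem_pmPolytope {G : SimpleGraph V} {x : Sym2 V → ℝ}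
    (hx : x ∈ pmPolytope G) (v : V) : edgeSum x (cutE G {v}) = 1 := by
  refine convexHull_min ?_ (convex_hyperplane (edgeSumL (cutE G {v})).isLinear 1) hx
  rintro _ ⟨N, hN, rfl⟩
  simp [edgeSumL, edgeSum_indVec, hN.card_inter_cutE_singleton]

theorem edgeSum_cutE_singleton_eq_of_mem_span {G : SimpleGraph V} {z : Sym2 V → ℝ}
    (hz : z ∈ Submodule.span ℝ (pmPolytope G)) (u v : V) :
    edgeSum z (cutE G {u}) = edgeSum z (cutE G {v}) := by
  rw [pmPolytope, Submodule.span_convexHull] at hz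
  refine LinearMap.eqOn_span (f := edgeSumL (cutE G {u})) (g := edgeSumL (cutE G {v})) ?_ hz
  rintro _ ⟨N, hN, rfl⟩
  simp [edgeSumL, edgeSum_indVec, hN.card_inter_cutE_singleton]

theorem edgeSum_cutE_eq_of_mem_span {G : SimpleGraph V} {X : Set V} {S : Set (Sym2 V → ℝ)}
    (hS : ∀ b ∈ S, ∃ N, IsPM G N ∧ #(N ∩ cutE G X) = 1 ∧ b = indVec N) {w : Sym2 V → ℝ}
    (hw : w ∈ Submodule.span ℝ S) (v : V) :
    edgeSum w (cutE G X) = edgeSum w (cutE G {v}) := by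
  refine LinearMap.eqOn_span (f := edgeSumL (cutE G X)) (g := edgeSumL (cutE G {v})) ?_ hw
  intro b hb
  obtain ⟨N, hN, hNX, rfl⟩ := hS b hb
  simp [edgeSumL, edgeSum_indVec, hNX, hN.card_inter_cutE_singleton]

theorem exists_edgeSum_cutE_sub_eq_two_mul {G : SimpleGraph V} {X : Set V}
    (hX : Odd #X.toFinset) {z : Sym2 V → ℝ} (hz : z ∈ Submodule.span ℝ (pmPolytope G))
    (hzi : Integral z) (v : V) :
    ∃ m : ℤ, edgeSum z (cutE G X) - edgeSum z (cutE G {v}) = 2 * m := by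
  obtain ⟨t, ht⟩ := hX
  obtain ⟨k, hk⟩ := hzi.exists_edgeSum_eq_intCast (cutE G {v})
  obtain ⟨j, hj⟩ := hzi.exists_edgeSum_eq_intCast {e ∈ G.edgeFinset | ∀ u ∈ e, u ∈ X}
  have hcount := sum_edgeSum_cutE_singleton G X z
  rw [Finset.sum_congr rfl fun u _ => edgeSum_cutE_singleton_eq_of_mem_span hz u v,
    Finset.sum_const, nsmul_eq_mul, ht, hk, hj] at hcount
  refine ⟨t * k - j, ?_⟩
  rw [hk]
  push_cast at hcount ⊢
  linarith

omit [DecidableEq V] in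
theorem finrank_span_eq_polyDim_add_one (f : (Sym2 V → ℝ) →ₗ[ℝ] ℝ) {S : Set (Sym2 V → ℝ)}
    (hS : ∀ x ∈ S, f x = 1) : (Module.finrank ℝ (Submodule.span ℝ S) : ℤ) = polyDim S + 1 := by
  rw [polyDim]
  split_ifs with hempty
  · simp [hempty]
  · obtain ⟨x₀, hx₀⟩ := Set.nonempty_iff_ne_empty.2 hempty
    rw [finrank_span_eq_finrank_vectorSpan_add_one f hS hx₀]
    push_cast
    rfl

section ExtendedBasis

variable {G : SimpleGraph V} {X : Set V} {B : Set (Sym2 V → ℝ)}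
  (hB : ∀ b ∈ B, ∃ N, IsPM G N ∧ #(N ∩ cutE G X) = 1 ∧ b = indVec N)
  {M : Finset (Sym2 V)} (hM : IsPM G M) (hM3 : #(M ∩ cutE G X) = 3)
include hB hM hM3

theorem two_mul_coeff_eq {z w : Sym2 V → ℝ} {α : ℝ} (hw : w ∈ Submodule.span ℝ B)
    (hz : z = α • indVec M + w) (v : V) :
    2 * α = edgeSum z (cutE G X) - edgeSum z (cutE G {v}) := by
  rw [hz, edgeSum_add, edgeSum_add, edgeSum_smul, edgeSum_smul, edgeSum_indVec, edgeSum_indVec,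
    hM3, hM.card_inter_cutE_singleton, edgeSum_cutE_eq_of_mem_span hB hw v]
  push_cast
  ring

theorem indVec_notMem_span [Nonempty V] : indVec M ∉ Submodule.span ℝ B := fun h => by
  have := edgeSum_cutE_eq_of_mem_span hB h (Classical.arbitrary V)
  rw [edgeSum_indVec, edgeSum_indVec, hM3, hM.card_inter_cutE_singleton] at this
  norm_num at this

theorem exists_coeff_eq_intCast (hX : Odd #X.toFinset) {z w : Sym2 V → ℝ} {α : ℝ}
    (hz : z ∈ Submodule.span ℝ (pmPolytope G)) (hzi : Integral z) (hw : w ∈ Submodule.span ℝ B)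
    (hzw : z = α • indVec M + w) : ∃ m : ℤ, α = m := by
  obtain ⟨v, -⟩ := Finset.card_pos.1 hX.pos
  obtain ⟨m, hm⟩ := exists_edgeSum_cutE_sub_eq_two_mul hX hz hzi v
  exact ⟨m, by linarith [two_mul_coeff_eq hB hM hM3 hw hzw v]⟩

theorem span_insert_indVec_eq_span_pmPolytope [Nonempty V]
    (hBspan : Submodule.span ℝ B = Submodule.span ℝ (faceCut G X))
    (hfacet : polyDim (faceCut G X) = polyDim (pmPolytope G) - 1) :
    Submodule.span ℝ (insert (indVec M) B) = Submodule.span ℝ (pmPolytope G) := by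
  have hMP : indVec M ∈ pmPolytope G := subset_convexHull ℝ _ ⟨M, hM, rfl⟩
  have hBP : B ⊆ Submodule.span ℝ (pmPolytope G) := fun b hb =>
    Submodule.span_mono (Set.sep_subset _ _) (hBspan ▸ Submodule.subset_span hb)
  refine Submodule.eq_of_le_of_finrank_eq
    (Submodule.span_le.2 (Set.insert_subset_iff.2 ⟨Submodule.subset_span hMP, hBP⟩)) ?_
  have v : V := Classical.arbitrary V
  have hP := finrank_span_eq_polyDim_add_one (edgeSumL (cutE G {v})) (S := pmPolytope G)
    fun x hx => edgeSum_cutE_singleton_eq_one_of_mem_pmPolytope hx v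
  have hF := finrank_span_eq_polyDim_add_one (edgeSumL (cutE G {v})) (S := faceCut G X)
    fun x hx => edgeSum_cutE_singleton_eq_one_of_mem_pmPolytope hx.1 v
  rw [Submodule.span_insert, sup_comm,
    Submodule.finrank_sup_span_singleton (indVec_notMem_span hB hM hM3), hBspan]
  omega

theorem mem_span_int_insert_indVec (hX : Odd #X.toFinset)
    (hspan : Submodule.span ℝ (insert (indVec M) B) = Submodule.span ℝ (pmPolytope G))
    (hBint : ∀ z, z ∈ Submodule.span ℝ B → Integral z → z ∈ Submodule.span ℤ B)
    {z : Sym2 V → ℝ} (hz : z ∈ Submodule.span ℝ (pmPolytope G)) (hzi : Integral z) :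
    z ∈ Submodule.span ℤ (insert (indVec M) B) := by
  obtain ⟨β, u, hu, rfl⟩ := Submodule.mem_span_insert.1 (hspan ▸ hz)
  obtain ⟨m, rfl⟩ := exists_coeff_eq_intCast hB hM hM3 hX hz hzi hu rfl
  have hui : u ∈ Submodule.span ℤ B :=
    hBint u hu (by simpa using hzi.sub_intCast_smul_indVec m M)
  rw [Int.cast_smul_eq_zsmul]
  exact add_mem (zsmul_mem (Submodule.subset_span (Set.mem_insert _ _)) m)
    (Submodule.span_mono (Set.subset_insert _ _) hui)

end ExtendedBasis

theorem stmt17_general (G : SimpleGraph V) (X : Set V)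
    (hsep : SeparatingCut G X)
    (hfacet : polyDim (faceCut G X) = polyDim (pmPolytope G) - 1)
    (B' : Set (Sym2 V → ℝ))
    (hB'pm : ∀ b ∈ B', ∃ N, IsPM G N ∧ (N ∩ cutE G X).card = 1 ∧ b = indVec N)
    (hB'li : LinearIndependent ℝ (fun b : B' => (b : Sym2 V → ℝ)))
    (hB'span : Submodule.span ℝ B' = Submodule.span ℝ (faceCut G X))
    (hB'int : ∀ z, z ∈ Submodule.span ℝ B' → Integral z → z ∈ Submodule.span ℤ B')
    (M : Finset (Sym2 V)) (hM : IsPM G M) (hM3 : (M ∩ cutE G X).card = 3) :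
    LinearIndependent ℝ
      (fun b : (insert (indVec M) B' : Set (Sym2 V → ℝ)) => (b : Sym2 V → ℝ)) ∧
    Submodule.span ℝ (insert (indVec M) B') = Submodule.span ℝ (pmPolytope G) ∧
    (∀ z, z ∈ Submodule.span ℝ (pmPolytope G) → Integral z →
      z ∈ Submodule.span ℤ (insert (indVec M) B')) ∧
    ∀ z, z ∈ Submodule.span ℝ (pmPolytope G) → Integral z →
      ∀ (α : ℝ) (w : Sym2 V → ℝ), w ∈ Submodule.span ℝ B' → z = α • indVec M + w →
        (∀ v : V, 2 * α = edgeSum z (cutE G X) - edgeSum z (cutE G {v})) ∧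
        (∃ m : ℤ, α = (m : ℝ)) ∧
        (∀ v : V, ∃ m : ℤ,
          edgeSum z (cutE G X) - edgeSum z (cutE G {v}) = 2 * (m : ℝ)) := by
  obtain ⟨hX, -⟩ := hsep
  obtain ⟨v, -⟩ := Finset.card_pos.1 hX.pos
  have : Nonempty V := ⟨v⟩
  have hspan := span_insert_indVec_eq_span_pmPolytope hB'pm hM hM3 hB'span hfacet
  refine ⟨LinearIndepOn.id_insert hB'li (indVec_notMem_span hB'pm hM hM3), hspan,
    fun z hz hzi => mem_span_int_insert_indVec hB'pm hM hM3 hX hspan hB'int hz hzi,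
    fun z hz hzi α w hw hzw => ⟨two_mul_coeff_eq hB'pm hM hM3 hw hzw,
      exists_coeff_eq_intCast hB'pm hM hM3 hX hz hzi hw hzw,
      exists_edgeSum_cutE_sub_eq_two_mul hX hz hzi⟩⟩

/-- extending an integral basis of `lin P(G;C)` (made of perfect
matchings meeting the separating facet-defining cut `C` once) by a perfect matching
`M` with `|M ∩ C| = 3` gives an integral basis of `lin P(G)`; moreover, the
coefficient `α` of `1_M` in the expansion of an integral `z ∈ lin P(G)` satisfies
`2α = z(C) − c` with `c = z(δ(v))`, and `z(C) ≡ c (mod 2)`. -/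
theorem stmt17 (G : SimpleGraph V) (hG : MatchingCovered G) (X : Set V)
    (hsep : SeparatingCut G X)
    (hfacet : polyDim (faceCut G X) = polyDim (pmPolytope G) - 1)
    (B' : Set (Sym2 V → ℝ))
    (hB'pm : ∀ b ∈ B', ∃ N, IsPM G N ∧ (N ∩ cutE G X).card = 1 ∧ b = indVec N)
    (hB'li : LinearIndependent ℝ (fun b : B' => (b : Sym2 V → ℝ)))
    (hB'span : Submodule.span ℝ B' = Submodule.span ℝ (faceCut G X))
    (hB'int : ∀ z, z ∈ Submodule.span ℝ B' → Integral z → z ∈ Submodule.span ℤ B')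
    (M : Finset (Sym2 V)) (hM : IsPM G M) (hM3 : (M ∩ cutE G X).card = 3) :
    LinearIndependent ℝ
      (fun b : (insert (indVec M) B' : Set (Sym2 V → ℝ)) => (b : Sym2 V → ℝ)) ∧
    Submodule.span ℝ (insert (indVec M) B') = Submodule.span ℝ (pmPolytope G) ∧
    (∀ z, z ∈ Submodule.span ℝ (pmPolytope G) → Integral z →
      z ∈ Submodule.span ℤ (insert (indVec M) B')) ∧
    ∀ z, z ∈ Submodule.span ℝ (pmPolytope G) → Integral z →
      ∀ (α : ℝ) (w : Sym2 V → ℝ), w ∈ Submodule.span ℝ B' → z = α • indVec M + w →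
        (∀ v : V, 2 * α = edgeSum z (cutE G X) - edgeSum z (cutE G {v})) ∧
        (∃ m : ℤ, α = (m : ℝ)) ∧
        (∀ v : V, ∃ m : ℤ,
          edgeSum z (cutE G X) - edgeSum z (cutE G {v}) = 2 * (m : ℝ)) :=
  stmt17_general G X hsep hfacet B' hB'pm hB'li hB'span hB'int M hM hM3

end PaperPM
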